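/- arXiv:2601.10564 — 4 statements merged into one kernel-verified Lean document; each statement's English description precedes it below -/
import Mathlib

section
/- Let (M, R), (N, L), (H, W) be Noetherian confluent MRS with normal-form functions nf_R, nf_L, nf_W, and let φ : (M, R) → (N, L) and ψ : (N, L) → (H, W) be MRS-homomorphisms. Then (ψ ∘ φ)♯ = ψ♯ ∘ φ♯: for every irreducible u ∈ M, nf_W (ψ (φ u)) = nf_W (ψ (nf_L (φ u))). -/
namespace MRS

/-- One-step rewriting relation of an MRS `(M, R)`. -/
def Step {M : Type*} [Monoid M] (R : M → M → Prop) (a b : M) : Prop :=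
  ∃ x y s t : M, a = x * s * y ∧ b = x * t * y ∧ R s t

/-- An element is irreducible for a relation if it only rewrites to itself. -/
def IrredRel {α : Type*} (r : α → α → Prop) (a : α) : Prop :=
  ∀ b, r a b → a = b

/-- A relation is Noetherian if there is no infinite chain of non-trivial steps. -/
def NoetherianRel {α : Type*} (r : α → α → Prop) : Prop :=
  ¬ ∃ f : ℕ → α, ∀ n, r (f n) (f (n + 1)) ∧ f n ≠ f (n + 1)

/-- Confluence of a relation. -/
def ConfluentRel {α : Type*} (r : α → α → Prop) : Prop :=
  ∀ u a b : α, Relation.ReflTransGen r u a → Relation.ReflTransGen r u b →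
    ∃ c, Relation.ReflTransGen r a c ∧ Relation.ReflTransGen r b c

/-- `nf` is a normal-form function for the MRS `(M, R)`. -/
def IsNF {M : Type*} [Monoid M] (R : M → M → Prop) (nf : M → M) : Prop :=
  ∀ u, Relation.ReflTransGen (Step R) u (nf u) ∧ IrredRel (Step R) (nf u)

end MRS

namespace MRS

open Relation

theorem IrredRel.eq_of_reflTransGen {α : Type*} {r : α → α → Prop} {a b : α}
    (ha : IrredRel r a) (hab : ReflTransGen r a b) : a = b := by
  induction hab with
  | refl => rfl
  | tail _ hbc ih =>
    subst ih
    exact ha _ hbc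

theorem ConfluentRel.eq_of_irredRel {α : Type*} {r : α → α → Prop} (hr : ConfluentRel r)
    {u a b : α} (hua : ReflTransGen r u a) (hub : ReflTransGen r u b)
    (ha : IrredRel r a) (hb : IrredRel r b) : a = b := by
  obtain ⟨c, hac, hbc⟩ := hr u a b hua hub
  rw [ha.eq_of_reflTransGen hac, hb.eq_of_reflTransGen hbc]

theorem IsNF.eq_of_reflTransGen {M : Type*} [Monoid M] {R : M → M → Prop} {nf : M → M}
    (hnf : IsNF R nf) (hR : ConfluentRel (Step R)) {a b : M}
    (hab : ReflTransGen (Step R) a b) : nf a = nf b :=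
  hR.eq_of_irredRel (hnf a).1 (hab.trans (hnf b).1) (hnf a).2 (hnf b).2

theorem Step.mul_mul {M : Type*} [Monoid M] {R : M → M → Prop} {a b : M}
    (h : Step R a b) (x y : M) : Step R (x * a * y) (x * b * y) := by
  obtain ⟨p, q, s, t, rfl, rfl, hst⟩ := h
  exact ⟨x * p, q * y, s, t, by simp only [mul_assoc], by simp only [mul_assoc], hst⟩

theorem reflTransGen_step_map {M N : Type*} [Monoid M] [Monoid N] {R : M → M → Prop}
    {L : N → N → Prop} (φ : M →* N) (hφ : ∀ u v, R u v → ReflTransGen (Step L) (φ u) (φ v))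
    {a b : M} (hab : ReflTransGen (Step R) a b) : ReflTransGen (Step L) (φ a) (φ b) := by
  refine ReflTransGen.lift' φ (fun a b hab ↦ ?_) a b hab
  obtain ⟨x, y, s, t, rfl, rfl, hst⟩ := hab
  simp only [Function.onFun, map_mul]
  exact ReflTransGen.lift (fun c ↦ φ x * c * φ y) (fun _ _ h ↦ h.mul_mul _ _) _ _ (hφ s t hst)

end MRS

open MRS

theorem stmt_7_general {M N H : Type*} [Monoid M] [Monoid N] [Monoid H]
    (R : M → M → Prop) (L : N → N → Prop) (W : H → H → Prop)
    (hConfW : ConfluentRel (Step W))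
    (nfL : N → N) (hnfL : IsNF L nfL)
    (nfW : H → H) (hnfW : IsNF W nfW)
    (φ : M →* N)
    (ψ : N →* H)
    (hψ : ∀ u v : N, L u v → Relation.ReflTransGen (Step W) (ψ u) (ψ v)) :
    ∀ u : M, IrredRel (Step R) u → nfW (ψ (φ u)) = nfW (ψ (nfL (φ u))) :=
  fun u _ ↦ hnfW.eq_of_reflTransGen hConfW (reflTransGen_step_map ψ hψ (hnfL (φ u)).1)

/-- `(ψ ∘ φ)♯ = ψ♯ ∘ φ♯`. -/
theorem stmt_7 {M N H : Type*} [Monoid M] [Monoid N] [Monoid H]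
    (R : M → M → Prop) (L : N → N → Prop) (W : H → H → Prop)
    (hNoethR : NoetherianRel (Step R)) (hConfR : ConfluentRel (Step R))
    (hNoethL : NoetherianRel (Step L)) (hConfL : ConfluentRel (Step L))
    (hNoethW : NoetherianRel (Step W)) (hConfW : ConfluentRel (Step W))
    (nfR : M → M) (hnfR : IsNF R nfR) (nfL : N → N) (hnfL : IsNF L nfL)
    (nfW : H → H) (hnfW : IsNF W nfW)
    (φ : M →* N)
    (hφ : ∀ u v : M, R u v → Relation.ReflTransGen (Step L) (φ u) (φ v))
    (ψ : N →* H)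
    (hψ : ∀ u v : N, L u v → Relation.ReflTransGen (Step W) (ψ u) (ψ v)) :
    ∀ u : M, IrredRel (Step R) u → nfW (ψ (φ u)) = nfW (ψ (nfL (φ u))) :=
  stmt_7_general R L W hConfW nfL hnfL nfW hnfW φ ψ hψ
end

section
/- Let (M, R) be a Noetherian confluent MRS and J ⊆ R a coherent sub-relation with normal-form function nf_J for (M, J). If a →_R b in M, then ReflTransGen stepJ (nf_J a) (nf_J b), i.e. nf_J a reduces to nf_J b in the collapsed system (M_J, R_J). -/
open MRS

namespace MRS

/-- The one-step relation of the collapsed system `(M_J, R_J)`, expressed on `M`. -/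
def StepJ {M : Type*} [Monoid M] (R J : M → M → Prop) (nfJ : M → M) (a b : M) : Prop :=
  ∃ x y s t : M, IrredRel (Step J) x ∧ IrredRel (Step J) y ∧ R s t ∧ ¬ J s t ∧
    a = nfJ (x * s * y) ∧ b = nfJ (x * t * y)

end MRS

/-! The `J`-normal form of `x * s * y` is also the normal form of `nf_J x * s * nf_J y`, since
`→_J` is compatible with multiplication and normal forms are unique under confluence. Hence a
step `x * s * y →_R x * t * y` is either a `J`-step, which leaves the normal form unchanged, or
it is, after normalising the context, a single step of the collapsed system. -/

namespace MRS

theorem IrredRel.eq_of_reflTransGen_s15 {α : Type*} {r : α → α → Prop} {w c : α}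
    (hw : IrredRel r w) (h : Relation.ReflTransGen r w c) : w = c := by
  induction h with
  | refl => rfl
  | tail _ hstep ih => subst ih; exact hw _ hstep

section Step

variable {M : Type*} [Monoid M] {J : M → M → Prop}

theorem Step.mul_mul_s15 {u v : M} (x y : M) (h : Step J u v) :
    Step J (x * u * y) (x * v * y) := by
  obtain ⟨p, q, s, t, rfl, rfl, hst⟩ := h
  exact ⟨x * p, q * y, s, t, by simp only [mul_assoc], by simp only [mul_assoc], hst⟩

theorem reflTransGen_step_mul_mul {u v : M} (x y : M)
    (h : Relation.ReflTransGen (Step J) u v) :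
    Relation.ReflTransGen (Step J) (x * u * y) (x * v * y) :=
  Relation.ReflTransGen.lift (fun w ↦ x * w * y) (fun _ _ ↦ Step.mul_mul_s15 x y) _ _ h

namespace IsNF

variable {nf : M → M}

theorem reflTransGen_mul_nf_mul_nf (hnf : IsNF J nf) (x u y : M) :
    Relation.ReflTransGen (Step J) (x * u * y) (nf x * u * nf y) := by
  have hx := reflTransGen_step_mul_mul 1 (u * y) (hnf x).1
  have hy := reflTransGen_step_mul_mul (nf x * u) 1 (hnf y).1
  simp only [one_mul, mul_one, ← mul_assoc] at hx hy
  exact hx.trans hy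

theorem apply_eq_of_reflTransGen (hnf : IsNF J nf) (hconf : ConfluentRel (Step J)) {u w : M}
    (h : Relation.ReflTransGen (Step J) u w) (hw : IrredRel (Step J) w) : nf u = w := by
  obtain ⟨c, huc, hwc⟩ := hconf u (nf u) w (hnf u).1 h
  exact ((hnf u).2.eq_of_reflTransGen_s15 huc).trans (hw.eq_of_reflTransGen_s15 hwc).symm

theorem apply_eq_apply_of_reflTransGen (hnf : IsNF J nf) (hconf : ConfluentRel (Step J))
    {u v : M} (h : Relation.ReflTransGen (Step J) u v) : nf u = nf v :=
  hnf.apply_eq_of_reflTransGen hconf (h.trans (hnf v).1) (hnf v).2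

theorem apply_mul_mul_eq (hnf : IsNF J nf) (hconf : ConfluentRel (Step J)) (x u y : M) :
    nf (x * u * y) = nf (nf x * u * nf y) :=
  hnf.apply_eq_apply_of_reflTransGen hconf (hnf.reflTransGen_mul_nf_mul_nf x u y)

end IsNF

end Step

end MRS

theorem stmt_15_general {M : Type*} [Monoid M] (R J : M → M → Prop)
    (hConfJ : ConfluentRel (Step J))
    (nfJ : M → M) (hnfJ : IsNF J nfJ)
    (a b : M) (hab : Step R a b) :
    Relation.ReflTransGen (StepJ R J nfJ) (nfJ a) (nfJ b) := by
  obtain ⟨x, y, s, t, rfl, rfl, hst⟩ := hab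
  by_cases hJ : J s t
  · rw [hnfJ.apply_eq_apply_of_reflTransGen hConfJ (.single ⟨x, y, s, t, rfl, rfl, hJ⟩)]
  · rw [hnfJ.apply_mul_mul_eq hConfJ x s y, hnfJ.apply_mul_mul_eq hConfJ x t y]
    exact .single ⟨nfJ x, nfJ y, s, t, (hnfJ x).2, (hnfJ y).2, hst, hJ, rfl, rfl⟩

/-- If `a →_R b`, then `nf_J a` reduces to `nf_J b` in the collapsed
system `(M_J, R_J)`. -/
theorem stmt_15 {M : Type*} [Monoid M] (R J : M → M → Prop)
    (hJR : ∀ s t : M, J s t → R s t)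
    (hNoethR : NoetherianRel (Step R)) (hConfR : ConfluentRel (Step R))
    (hConfJ : ConfluentRel (Step J))
    (nfJ : M → M) (hnfJ : IsNF J nfJ)
    (hSNoeth : NoetherianRel (StepJ R J nfJ))
    (hSConf : ∀ u a b : M, IrredRel (Step J) u →
      Relation.ReflTransGen (StepJ R J nfJ) u a →
      Relation.ReflTransGen (StepJ R J nfJ) u b →
      ∃ c, Relation.ReflTransGen (StepJ R J nfJ) a c ∧
        Relation.ReflTransGen (StepJ R J nfJ) b c)
    (a b : M) (hab : Step R a b) :
    Relation.ReflTransGen (StepJ R J nfJ) (nfJ a) (nfJ b) :=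
  stmt_15_general R J hConfJ nfJ hnfJ a b hab
end

section
/- Let (M, R) be a Noetherian confluent MRS and J ⊆ R a coherent sub-relation with normal-form function nf_J for (M, J). If a ∈ M is J-irreducible and is irreducible for stepJ (i.e. stepJ a b implies a = b), then a is irreducible for R. -/
open MRS

section Helpers

open Relation

lemma irred_rtg {α : Type*} {r : α → α → Prop} {u v : α}
    (hirr : IrredRel r u) (h : Relation.ReflTransGen r u v) : u = v := by
  induction h with
  | refl => rfl
  | tail h1 h2 ih => subst ih; exact hirr _ h2

lemma rtg_ne {α : Type*} {r : α → α → Prop} {b a : α}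
    (h : Relation.ReflTransGen r b a) :
    Relation.ReflTransGen (fun x y => r x y ∧ x ≠ y) b a := by
  induction h with
  | refl => exact .refl
  | @tail c d h1 h2 ih =>
    by_cases he : c = d
    · exact he ▸ ih
    · exact ih.tail ⟨h2, he⟩

lemma no_cycle {α : Type*} {r : α → α → Prop} (hN : NoetherianRel r)
    {a b : α} (h1 : r a b) (hne : a ≠ b)
    (h2 : Relation.ReflTransGen r b a) : False := by
  set r' : α → α → Prop := fun x y => r x y ∧ x ≠ y with hr'
  have h2' : Relation.ReflTransGen r' b a := rtg_ne h2
  have key : ∀ x : α, Relation.ReflTransGen r' x a →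
      ∃ y, r' x y ∧ Relation.ReflTransGen r' y a := by
    intro x hx
    rcases hx.cases_head with rfl | ⟨y, hxy, hy⟩
    · exact ⟨b, ⟨h1, hne⟩, h2'⟩
    · exact ⟨y, hxy, hy⟩
  choose g hg1 hg2 using key
  let f : ℕ → {x : α // Relation.ReflTransGen r' x a} := fun n =>
    Nat.rec ⟨a, .refl⟩ (fun _ p => ⟨g p.1 p.2, hg2 p.1 p.2⟩) n
  exact hN ⟨fun n => (f n).1, fun n => ⟨(hg1 (f n).1 (f n).2).1, (hg1 (f n).1 (f n).2).2⟩⟩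

variable {M : Type*} [Monoid M] {J : M → M → Prop}

lemma step_mul_left {u v : M} (c : M) (h : Step J u v) : Step J (c * u) (c * v) := by
  obtain ⟨p, q, s, t, hu, hv, hst⟩ := h
  exact ⟨c * p, q, s, t, by rw [hu]; simp [mul_assoc],
    by rw [hv]; simp [mul_assoc], hst⟩

lemma step_mul_right {u v : M} (d : M) (h : Step J u v) : Step J (u * d) (v * d) := by
  obtain ⟨p, q, s, t, hu, hv, hst⟩ := h
  exact ⟨p, q * d, s, t, by rw [hu]; simp [mul_assoc],
    by rw [hv]; simp [mul_assoc], hst⟩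

lemma rtg_mul_left {u v : M} (c : M) (h : Relation.ReflTransGen (Step J) u v) :
    Relation.ReflTransGen (Step J) (c * u) (c * v) :=
  Relation.ReflTransGen.lift (c * ·) (fun _ _ h => step_mul_left c h) _ _ h

lemma rtg_mul_right {u v : M} (d : M) (h : Relation.ReflTransGen (Step J) u v) :
    Relation.ReflTransGen (Step J) (u * d) (v * d) :=
  Relation.ReflTransGen.lift (· * d) (fun _ _ h => step_mul_right d h) _ _ h

lemma nf_eq_of_rtg {nfJ : M → M} (hConfJ : ConfluentRel (Step J))
    (hnfJ : IsNF J nfJ) {u v : M} (h : Relation.ReflTransGen (Step J) u v) :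
    nfJ u = nfJ v := by
  obtain ⟨c, hc1, hc2⟩ := hConfJ u (nfJ u) (nfJ v) (hnfJ u).1 (h.trans (hnfJ v).1)
  exact (irred_rtg (hnfJ u).2 hc1).trans (irred_rtg (hnfJ v).2 hc2).symm

end Helpers

/-- A `J`-irreducible element that is irreducible for `stepJ` is
irreducible for `R`. -/
theorem stmt_16 {M : Type*} [Monoid M] (R J : M → M → Prop)
    (hJR : ∀ s t : M, J s t → R s t)
    (hNoethR : NoetherianRel (Step R)) (hConfR : ConfluentRel (Step R))
    (hConfJ : ConfluentRel (Step J))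
    (nfJ : M → M) (hnfJ : IsNF J nfJ)
    (hSNoeth : NoetherianRel (StepJ R J nfJ))
    (hSConf : ∀ u a b : M, IrredRel (Step J) u →
      Relation.ReflTransGen (StepJ R J nfJ) u a →
      Relation.ReflTransGen (StepJ R J nfJ) u b →
      ∃ c, Relation.ReflTransGen (StepJ R J nfJ) a c ∧
        Relation.ReflTransGen (StepJ R J nfJ) b c)
    (a : M) (haJ : IrredRel (Step J) a) (haS : IrredRel (StepJ R J nfJ) a) :
    IrredRel (Step R) a := by
  intro b hb
  obtain ⟨x, y, s, t, hax, hbx, hst⟩ := hb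
  by_cases hJst : J s t
  · exact haJ b ⟨x, y, s, t, hax, hbx, hJst⟩
  · have hnfa : nfJ a = a := (irred_rtg haJ (hnfJ a).1).symm
    set x' := nfJ x with hx'
    set y' := nfJ y with hy'
    have hrw : ∀ z : M, Relation.ReflTransGen (Step J) (x * z * y) (x' * z * y') := by
      intro z
      have h1 : Relation.ReflTransGen (Step J) (x * (z * y)) (x' * (z * y)) :=
        rtg_mul_right (z * y) (hnfJ x).1
      have h2 : Relation.ReflTransGen (Step J) (x' * z * y) (x' * z * y') :=
        rtg_mul_left (x' * z) (hnfJ y).1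
      have h1' : Relation.ReflTransGen (Step J) (x * z * y) (x' * z * y) := by
        rw [mul_assoc x z y, mul_assoc x' z y]; exact h1
      exact h1'.trans h2
    have haeq : a = nfJ (x' * s * y') := by
      rw [← hnfa, hax]
      exact nf_eq_of_rtg hConfJ hnfJ (hrw s)
    have hstep : StepJ R J nfJ a (nfJ (x' * t * y')) :=
      ⟨x', y', s, t, (hnfJ x).2, (hnfJ y).2, hst, hJst, haeq, rfl⟩
    have hab' : a = nfJ (x' * t * y') := haS _ hstep
    have hba : Relation.ReflTransGen (Step J) b a := by
      have : nfJ b = a := by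
        rw [hbx, nf_eq_of_rtg hConfJ hnfJ (hrw t), ← hab']
      exact this ▸ (hnfJ b).1
    have hbaR : Relation.ReflTransGen (Step R) b a :=
      Relation.ReflTransGen.mono (p := Step R) (fun u v ⟨p, q, s', t', h1, h2, h3⟩ =>
        ⟨p, q, s', t', h1, h2, hJR _ _ h3⟩) _ _ hba
    by_contra hne
    exact no_cycle hNoethR ⟨x, y, s, t, hax, hbx, hst⟩ hne hbaR
end

section
/- Let (M, R) be a Noetherian confluent MRS and J ⊆ R a coherent sub-relation with normal-form function nf_J for (M, J). Then for every J-irreducible c ∈ M there exists an element a ∈ M that is irreducible for R and is related to c by the equivalence relation generated by stepJ. (This is the surjectivity of the canonical map I(M, R) → M_J/↔_{R_J}*; together with injectivity it yields I(M, R) ≅ I(M_J, R_J), i.e. a type-4 generalized elementary Tietze transformation does not change the monoid of irreducibles.) -/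
open MRS

section Aux

variable {M : Type*} [Monoid M]

lemma aux_step_mul_left {R : M → M → Prop} (c : M) {a b : M} (h : Step R a b) :
    Step R (c * a) (c * b) := by
  obtain ⟨x, y, s, t, ha, hb, hst⟩ := h
  exact ⟨c * x, y, s, t, by rw [ha]; simp [mul_assoc], by rw [hb]; simp [mul_assoc], hst⟩

lemma aux_step_mul_right {R : M → M → Prop} (c : M) {a b : M} (h : Step R a b) :
    Step R (a * c) (b * c) := by
  obtain ⟨x, y, s, t, ha, hb, hst⟩ := h
  exact ⟨x, y * c, s, t, by rw [ha]; simp [mul_assoc], by rw [hb]; simp [mul_assoc], hst⟩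

lemma aux_rtg_mul_left {R : M → M → Prop} (c : M) {a b : M}
    (h : Relation.ReflTransGen (Step R) a b) :
    Relation.ReflTransGen (Step R) (c * a) (c * b) :=
  Relation.ReflTransGen.lift (fun z => c * z) (fun _ _ h => aux_step_mul_left c h) _ _ h

lemma aux_rtg_mul_right {R : M → M → Prop} (c : M) {a b : M}
    (h : Relation.ReflTransGen (Step R) a b) :
    Relation.ReflTransGen (Step R) (a * c) (b * c) :=
  Relation.ReflTransGen.lift (fun z => z * c) (fun _ _ h => aux_step_mul_right c h) _ _ h

lemma aux_irred_rtg {α : Type*} {r : α → α → Prop} {a b : α}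
    (ha : IrredRel r a) (h : Relation.ReflTransGen r a b) : a = b := by
  induction h with
  | refl => rfl
  | tail _ step ih => exact ih.trans (ih ▸ ha _ (ih ▸ step))

lemma aux_nf_unique {J : M → M → Prop} (hConfJ : ConfluentRel (Step J))
    {nfJ : M → M} (hnfJ : IsNF J nfJ) {u w : M}
    (h : Relation.ReflTransGen (Step J) u w) (hw : IrredRel (Step J) w) :
    w = nfJ u := by
  obtain ⟨d, h1, h2⟩ := hConfJ u w (nfJ u) h (hnfJ u).1
  exact (aux_irred_rtg hw h1).trans (aux_irred_rtg (hnfJ u).2 h2).symm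

lemma aux_key {R J : M → M → Prop} (hConfJ : ConfluentRel (Step J))
    {nfJ : M → M} (hnfJ : IsNF J nfJ) {u v : M} (h : Step R u v) :
    Relation.EqvGen (StepJ R J nfJ) (nfJ u) (nfJ v) := by
  obtain ⟨x, y, s, t, hu, hv, hst⟩ := h
  by_cases hJ : J s t
  · have hstep : Step J u v := ⟨x, y, s, t, hu, hv, hJ⟩
    have : nfJ v = nfJ u :=
      aux_nf_unique hConfJ hnfJ
        (Relation.ReflTransGen.head hstep (hnfJ v).1) (hnfJ v).2
    rw [this]
    exact Relation.EqvGen.refl _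
  · have hredx : ∀ z : M, Relation.ReflTransGen (Step J) (x * z * y) (nfJ x * z * nfJ y) := by
      intro z
      have h1 : Relation.ReflTransGen (Step J) (x * z * y) (x * z * nfJ y) :=
        aux_rtg_mul_left (x * z) (hnfJ y).1
      have h2 : Relation.ReflTransGen (Step J) (x * (z * nfJ y)) (nfJ x * (z * nfJ y)) :=
        aux_rtg_mul_right (z * nfJ y) (hnfJ x).1
      rw [← mul_assoc, ← mul_assoc] at h2
      exact h1.trans h2
    have hs : nfJ (nfJ x * s * nfJ y) = nfJ u := by
      apply aux_nf_unique hConfJ hnfJ _ (hnfJ _).2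
      rw [hu]
      exact (hredx s).trans (hnfJ _).1
    have ht : nfJ (nfJ x * t * nfJ y) = nfJ v := by
      apply aux_nf_unique hConfJ hnfJ _ (hnfJ _).2
      rw [hv]
      exact (hredx t).trans (hnfJ _).1
    have : StepJ R J nfJ (nfJ u) (nfJ v) := by
      rw [← hs, ← ht]
      exact ⟨nfJ x, nfJ y, s, t, (hnfJ x).2, (hnfJ y).2, hst, hJ, rfl, rfl⟩
    exact Relation.EqvGen.rel _ _ this

lemma aux_key_rtg {R J : M → M → Prop} (hConfJ : ConfluentRel (Step J))
    {nfJ : M → M} (hnfJ : IsNF J nfJ) {u v : M}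
    (h : Relation.ReflTransGen (Step R) u v) :
    Relation.EqvGen (StepJ R J nfJ) (nfJ u) (nfJ v) := by
  induction h with
  | refl => exact Relation.EqvGen.refl _
  | tail _ step ih => exact ih.trans _ _ _ (aux_key hConfJ hnfJ step)

lemma aux_exists_nf {R : M → M → Prop} (hNoethR : NoetherianRel (Step R)) (c : M) :
    ∃ a : M, Relation.ReflTransGen (Step R) c a ∧ IrredRel (Step R) a := by
  by_contra h
  push_neg at h
  have h' : ∀ a : {x // Relation.ReflTransGen (Step R) c x},
      ∃ b : {x // Relation.ReflTransGen (Step R) c x}, Step R a.1 b.1 ∧ a.1 ≠ b.1 := by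
    rintro ⟨a, ha⟩
    have := h a ha
    unfold IrredRel at this
    push_neg at this
    obtain ⟨b, hb1, hb2⟩ := this
    exact ⟨⟨b, ha.tail hb1⟩, hb1, hb2⟩
  choose g hg1 hg2 using h'
  exact hNoethR ⟨fun n => (g^[n] ⟨c, Relation.ReflTransGen.refl⟩).1, fun n => by
    simp only []
    rw [Function.iterate_succ_apply']
    exact ⟨hg1 _, hg2 _⟩⟩

end Aux

/-- Every `J`-irreducible element is `stepJ`-equivalent to an
`R`-irreducible element. -/
theorem stmt_18 {M : Type*} [Monoid M] (R J : M → M → Prop)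
    (hJR : ∀ s t : M, J s t → R s t)
    (hNoethR : NoetherianRel (Step R)) (hConfR : ConfluentRel (Step R))
    (hConfJ : ConfluentRel (Step J))
    (nfJ : M → M) (hnfJ : IsNF J nfJ)
    (hSNoeth : NoetherianRel (StepJ R J nfJ))
    (hSConf : ∀ u a b : M, IrredRel (Step J) u →
      Relation.ReflTransGen (StepJ R J nfJ) u a →
      Relation.ReflTransGen (StepJ R J nfJ) u b →
      ∃ c, Relation.ReflTransGen (StepJ R J nfJ) a c ∧
        Relation.ReflTransGen (StepJ R J nfJ) b c)
    (c : M) (hc : IrredRel (Step J) c) :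
    ∃ a : M, IrredRel (Step R) a ∧ Relation.EqvGen (StepJ R J nfJ) a c := by
  obtain ⟨a, hca, ha⟩ := aux_exists_nf hNoethR c
  have haJ : IrredRel (Step J) a := by
    intro b hb
    obtain ⟨x, y, s, t, h1, h2, h3⟩ := hb
    exact ha b ⟨x, y, s, t, h1, h2, hJR s t h3⟩
  have hnc : nfJ c = c := (aux_nf_unique hConfJ hnfJ Relation.ReflTransGen.refl hc).symm
  have hna : nfJ a = a := (aux_nf_unique hConfJ hnfJ Relation.ReflTransGen.refl haJ).symm
  have := aux_key_rtg hConfJ hnfJ hca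
  rw [hnc, hna] at this
  exact ⟨a, ha, this.symm _ _⟩
end
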